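/- arXiv:1907.04054 — 4 statements merged into one kernel-verified Lean document; each statement's English description precedes it below -/
import Mathlib

section
/- If (X_1, X_2) is conditionally iid, then Kendall's tau of (X_1, X_2) is non-negative. Specifically, for two independent copies (X_1^{(1)},X_2^{(1)}) and (X_1^{(2)},X_2^{(2)}) of (X_1,X_2), the probability of concordance minus the probability of discordance equals E[(∫ H^{(2)}(x-) dH^{(1)}(x) - ∫ H^{(1)}(x-) dH^{(2)}(x))^2] ≥ 0, where H^{(1)}, H^{(2)} are the iid latent random distribution functions of the two copies. -/
open MeasureTheory Filter

/-- A probability law on `ℝ^d` is *conditionally iid* if its distribution function is a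
mixture, over a probability measure `γ` on the space of one-dimensional distribution
functions, of products `h(x_1) ⋯ h(x_d)`. -/
def IsCondIID {d : ℕ} (μ : Measure (Fin d → ℝ)) : Prop :=
  ∃ γ : Measure (ℝ → ℝ), IsProbabilityMeasure γ ∧
    (∀ᵐ h ∂γ, Monotone h ∧ (∀ t, ContinuousWithinAt h (Set.Ici t) t) ∧
      Tendsto h atBot (nhds 0) ∧ Tendsto h atTop (nhds 1)) ∧
    ∀ x : Fin d → ℝ, (μ {y | ∀ i, y i ≤ x i}).toReal = ∫ h, ∏ i, h (x i) ∂γ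

/-!
Write `μ = ∫ dh ⊗ dh dγ(h)`. Given the latent distribution functions `h₁, h₂` of the two
copies, `(X₁, Y₁)` is an iid pair with law `dh₁` and `(X₂, Y₂)` an independent iid pair with
law `dh₂`. With `a = P(X₂ < X₁)` and `b = P(X₂ > X₁)`, independence makes the conditional
probability of concordance `a² + b²` and that of discordance `2ab ≤ a² + b²`. Integrating over
`(h₁, h₂)` gives the claim.
-/
open ProbabilityTheory Set
open scoped ENNReal Topology

def IsCDF (h : ℝ → ℝ) : Prop :=
  Monotone h ∧ (∀ t, ContinuousWithinAt h (Ici t) t) ∧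
    Tendsto h atBot (𝓝 0) ∧ Tendsto h atTop (𝓝 1)

lemma IsCDF.nonneg {h : ℝ → ℝ} (hh : IsCDF h) (x : ℝ) : 0 ≤ h x :=
  hh.1.le_of_tendsto hh.2.2.1 x

lemma IsCDF.isRatStieltjesPoint {h : ℝ → ℝ} (hh : IsCDF h) :
    IsRatStieltjesPoint (fun h (q : ℚ) ↦ h q) h where
  mono _ _ hpq := hh.1 (Rat.cast_le.mpr hpq)
  tendsto_atTop_one := hh.2.2.2.comp (tendsto_ratCast_atTop_iff.mpr tendsto_id)
  tendsto_atBot_zero := hh.2.2.1.comp (tendsto_ratCast_atBot_iff.mpr tendsto_id)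
  iInf_rat_gt_eq :=
    StieltjesFunction.iInf_Ioi_eq
      { toFun := fun q : ℚ ↦ h q
        mono' := fun _ _ hpq ↦ hh.1 (Rat.cast_le.mpr hpq)
        right_continuous' := fun q ↦ (hh.2.1 q).comp Rat.continuous_coe_real.continuousWithinAt
          fun _ hr ↦ mem_Ici.mpr (Rat.cast_le.mpr hr) }

lemma measurable_restrict_rat : Measurable fun (h : ℝ → ℝ) (q : ℚ) ↦ h q :=
  measurable_pi_lambda _ fun q ↦ measurable_pi_apply (q : ℝ)

/-- The law `dh`. Reading `h` only on the rationals is what makes `h ↦ dh` measurable; when `h`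
is not a distribution function, `cdfKernel h` is some unrelated probability measure. -/
noncomputable def cdfKernel : Kernel (ℝ → ℝ) ℝ where
  toFun h := (stieltjesOfMeasurableRat _ measurable_restrict_rat h).measure
  measurable' := measurable_measure_stieltjesOfMeasurableRat measurable_restrict_rat

instance : IsMarkovKernel cdfKernel :=
  ⟨fun h ↦ instIsProbabilityMeasure_stieltjesOfMeasurableRat measurable_restrict_rat h⟩

lemma IsCDF.stieltjesOfMeasurableRat_eq {h : ℝ → ℝ} (hh : IsCDF h) (x : ℝ) :
    stieltjesOfMeasurableRat _ measurable_restrict_rat h x = h x := by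
  rw [← StieltjesFunction.iInf_rat_gt_eq]
  refine .trans ?_ (StieltjesFunction.iInf_rat_gt_eq ⟨h, hh.1, hh.2.1⟩ x)
  congr! 2 with q
  rw [ProbabilityTheory.stieltjesOfMeasurableRat_eq,
    toRatCDF_of_isRatStieltjesPoint hh.isRatStieltjesPoint]

lemma IsCDF.cdfKernel_Iic {h : ℝ → ℝ} (hh : IsCDF h) (x : ℝ) :
    cdfKernel h (Iic x) = ENNReal.ofReal (h x) := by
  rw [← hh.stieltjesOfMeasurableRat_eq]
  exact measure_stieltjesOfMeasurableRat_Iic _ h x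

noncomputable def iidPairKernel : Kernel (ℝ → ℝ) (Fin 2 → ℝ) :=
  (cdfKernel ×ₖ cdfKernel).map MeasurableEquiv.finTwoArrow.symm

instance : IsMarkovKernel iidPairKernel :=
  Kernel.IsMarkovKernel.map _ MeasurableEquiv.finTwoArrow.symm.measurable

lemma iidPairKernel_apply (h : ℝ → ℝ) :
    iidPairKernel h = ((cdfKernel h).prod (cdfKernel h)).map MeasurableEquiv.finTwoArrow.symm := by
  rw [iidPairKernel, Kernel.map_apply _ MeasurableEquiv.finTwoArrow.symm.measurable,
    Kernel.prod_apply]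

lemma IsCDF.iidPairKernel_Iic {h : ℝ → ℝ} (hh : IsCDF h) (x : Fin 2 → ℝ) :
    iidPairKernel h (Iic x) = ENNReal.ofReal (∏ i, h (x i)) := by
  have hpre : MeasurableEquiv.finTwoArrow.symm ⁻¹' Iic x = Iic (x 0) ×ˢ Iic (x 1) := by
    ext p
    simp [MeasurableEquiv.finTwoArrow, Pi.le_def, Prod.le_def, Fin.forall_fin_two]
  rw [iidPairKernel_apply, MeasurableEquiv.map_apply, hpre, Measure.prod_prod,
    hh.cdfKernel_Iic, hh.cdfKernel_Iic, Fin.prod_univ_two, ENNReal.ofReal_mul (hh.nonneg _)]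

lemma MeasureTheory.Measure.ext_of_Iic_pi {ι : Type*} [Finite ι] {μ ν : Measure (ι → ℝ)}
    [IsFiniteMeasure μ] (h : ∀ x, μ (Iic x) = ν (Iic x)) : μ = ν := by
  have hspan : IsCountablySpanning (range (Iic : ℝ → Set ℝ)) :=
    ⟨fun n : ℕ ↦ Iic (n : ℝ), fun n ↦ ⟨n, rfl⟩,
      iUnion_eq_univ_iff.mpr fun x ↦ (exists_nat_ge x).imp fun _ ↦ mem_Iic.mpr⟩
  have hgen := generateFrom_eq_pi (fun _ : ι ↦ (borel_eq_generateFrom_Iic ℝ).symm.trans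
    BorelSpace.measurable_eq.symm) fun _ ↦ hspan
  refine ext_of_generateFrom_of_iUnion _ (fun n : ℕ ↦ Iic fun _ ↦ (n : ℝ)) hgen.symm
    (IsPiSystem.pi fun _ ↦ isPiSystem_Iic) ?_ (fun n ↦ ⟨_, fun _ _ ↦ ⟨n, rfl⟩, pi_univ_Iic _⟩)
    (fun _ ↦ measure_ne_top _ _) ?_
  · refine iUnion_eq_univ_iff.mpr fun x ↦ ?_
    obtain ⟨M, hM⟩ := Finite.bddAbove_range x
    obtain ⟨n, hn⟩ := exists_nat_ge M
    exact ⟨n, fun i ↦ (hM (mem_range_self i)).trans hn⟩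
  · rintro _ ⟨t, ht, rfl⟩
    choose x hx using fun i ↦ ht i (mem_univ i)
    rw [← funext hx, pi_univ_Iic]
    exact h x

theorem eq_comp_iidPairKernel {μ : Measure (Fin 2 → ℝ)} [IsFiniteMeasure μ]
    {γ : Measure (ℝ → ℝ)} [IsFiniteMeasure γ] (hγ : ∀ᵐ h ∂γ, IsCDF h)
    (hμ : ∀ x, (μ (Iic x)).toReal = ∫ h, ∏ i, h (x i) ∂γ) :
    μ = iidPairKernel ∘ₘ γ := by
  refine Measure.ext_of_Iic_pi fun x ↦ ?_
  have hprod_meas : Measurable fun h : ℝ → ℝ ↦ ∏ i, h (x i) :=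
    Finset.measurable_prod _ fun i _ ↦ measurable_pi_apply (x i)
  refine (ENNReal.toReal_eq_toReal_iff' (measure_ne_top _ _) (measure_ne_top _ _)).mp ?_
  rw [hμ, integral_eq_lintegral_of_nonneg_ae ?_ hprod_meas.aestronglyMeasurable,
    Measure.bind_apply measurableSet_Iic (Kernel.aemeasurable _)]
  · congr 1
    refine lintegral_congr_ae ?_
    filter_upwards [hγ] with h hh using (hh.iidPairKernel_Iic x).symm
  · filter_upwards [hγ] with h hh using Finset.prod_nonneg fun i _ ↦ hh.nonneg (x i)

section Independence

variable {α β γ δ : Type*} [MeasurableSpace α] [MeasurableSpace β] [MeasurableSpace γ]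
  [MeasurableSpace δ]

lemma MeasureTheory.Measure.comp_prod_comp {μ : Measure α} {ν : Measure γ} [SFinite μ]
    [SFinite ν] {κ : Kernel α β} {η : Kernel γ δ} [IsSFiniteKernel κ] [IsSFiniteKernel η] :
    (κ ∘ₘ μ).prod (η ∘ₘ ν) = (κ ∥ₖ η) ∘ₘ (μ.prod ν) := by
  rw [Measure.prod_comp_right, Measure.prod_comp_left, Measure.comp_assoc,
    Kernel.parallelComp_comp_parallelComp, Kernel.id_comp, Kernel.comp_id]

variable {s : α → Set γ} {t : β → Set δ}

lemma measurableSet_setOf_mem_and_mem (hs : MeasurableSet {p : α × γ | p.2 ∈ s p.1})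
    (ht : MeasurableSet {p : β × δ | p.2 ∈ t p.1}) :
    MeasurableSet {q : (α × β) × γ × δ | q.2.1 ∈ s q.1.1 ∧ q.2.2 ∈ t q.1.2} :=
  (hs.preimage (f := fun q : (α × β) × γ × δ ↦ (q.1.1, q.2.1)) (by fun_prop)).inter
    (ht.preimage (f := fun q : (α × β) × γ × δ ↦ (q.1.2, q.2.2)) (by fun_prop))

lemma MeasureTheory.Measure.prod_prod_apply_setOf_mem_and_mem
    (μ₁ : Measure α) (μ₂ : Measure β) (ν₁ : Measure γ) (ν₂ : Measure δ)
    [SFinite μ₁] [SFinite μ₂] [SFinite ν₁] [SFinite ν₂]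
    (hs : MeasurableSet {p : α × γ | p.2 ∈ s p.1}) (ht : MeasurableSet {p : β × δ | p.2 ∈ t p.1}) :
    ((μ₁.prod μ₂).prod (ν₁.prod ν₂)) {q | q.2.1 ∈ s q.1.1 ∧ q.2.2 ∈ t q.1.2}
      = (∫⁻ x, ν₁ (s x) ∂μ₁) * ∫⁻ y, ν₂ (t y) ∂μ₂ := by
  rw [Measure.prod_apply (measurableSet_setOf_mem_and_mem hs ht)]
  simp_rw [show ∀ a : α × β, Prod.mk a ⁻¹' {q : (α × β) × γ × δ | q.2.1 ∈ s q.1.1 ∧ q.2.2 ∈ t q.1.2}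
    = s a.1 ×ˢ t a.2 from fun _ ↦ rfl, Measure.prod_prod]
  exact lintegral_prod_mul (measurable_measure_prodMk_left hs).aemeasurable
    (measurable_measure_prodMk_left ht).aemeasurable

end Independence

lemma ENNReal.mul_add_mul_le_mul_self_add_mul_self (a b : ℝ≥0∞) :
    a * b + b * a ≤ a * a + b * b := by
  wlog hab : a ≤ b generalizing a b
  · rw [add_comm (a * b), add_comm (a * a)]
    exact this b a (le_of_not_ge hab)
  obtain ⟨c, rfl⟩ := exists_add_of_le hab
  calc a * (a + c) + (a + c) * a = a * a + a * a + (a * c + a * c) := by ring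
    _ ≤ a * a + a * a + (a * c + a * c) + c * c := le_self_add
    _ = a * a + (a + c) * (a + c) := by ring

theorem measure_discordant_le_measure_concordant (ν₁ ν₂ : Measure ℝ) [SFinite ν₁] [SFinite ν₂] :
    ((ν₁.prod ν₁).prod (ν₂.prod ν₂)) {q | (q.1.1 - q.2.1) * (q.1.2 - q.2.2) < 0}
      ≤ ((ν₁.prod ν₁).prod (ν₂.prod ν₂)) {q | 0 < (q.1.1 - q.2.1) * (q.1.2 - q.2.2)} := by
  have hlt : MeasurableSet {p : ℝ × ℝ | p.2 ∈ Iio p.1} :=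
    measurableSet_lt measurable_snd measurable_fst
  have hgt : MeasurableSet {p : ℝ × ℝ | p.2 ∈ Ioi p.1} :=
    measurableSet_lt measurable_fst measurable_snd
  have hconc : {q : (ℝ × ℝ) × ℝ × ℝ | 0 < (q.1.1 - q.2.1) * (q.1.2 - q.2.2)}
      = {q | q.2.1 ∈ Iio q.1.1 ∧ q.2.2 ∈ Iio q.1.2} ∪
        {q | q.2.1 ∈ Ioi q.1.1 ∧ q.2.2 ∈ Ioi q.1.2} := by
    ext q
    simp only [mem_ofPred_eq, mem_union, mem_Iio, mem_Ioi, mul_pos_iff, sub_pos, sub_neg]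
  have hdisc : {q : (ℝ × ℝ) × ℝ × ℝ | (q.1.1 - q.2.1) * (q.1.2 - q.2.2) < 0}
      = {q | q.2.1 ∈ Iio q.1.1 ∧ q.2.2 ∈ Ioi q.1.2} ∪
        {q | q.2.1 ∈ Ioi q.1.1 ∧ q.2.2 ∈ Iio q.1.2} := by
    ext q
    simp only [mem_ofPred_eq, mem_union, mem_Iio, mem_Ioi, mul_neg_iff, sub_pos, sub_neg]
  have hdisj : Disjoint {q : (ℝ × ℝ) × ℝ × ℝ | q.2.1 ∈ Iio q.1.1 ∧ q.2.2 ∈ Iio q.1.2}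
      {q | q.2.1 ∈ Ioi q.1.1 ∧ q.2.2 ∈ Ioi q.1.2} :=
    disjoint_left.mpr fun _ h₁ h₂ ↦ lt_asymm h₁.1 (mem_Ioi.mp h₂.1)
  rw [hconc, hdisc, measure_union hdisj (measurableSet_setOf_mem_and_mem hgt hgt)]
  refine (measure_union_le _ _).trans ?_
  simp only [Measure.prod_prod_apply_setOf_mem_and_mem _ _ _ _ hlt hgt,
    Measure.prod_prod_apply_setOf_mem_and_mem _ _ _ _ hgt hlt,
    Measure.prod_prod_apply_setOf_mem_and_mem _ _ _ _ hlt hlt,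
    Measure.prod_prod_apply_setOf_mem_and_mem _ _ _ _ hgt hgt]
  exact ENNReal.mul_add_mul_le_mul_self_add_mul_self _ _

theorem map_finTwoArrow_symm_prod_discordant_le (ν₁ ν₂ : Measure ℝ) [SFinite ν₁] [SFinite ν₂] :
    (((ν₁.prod ν₁).map MeasurableEquiv.finTwoArrow.symm).prod
        ((ν₂.prod ν₂).map MeasurableEquiv.finTwoArrow.symm))
        {p : (Fin 2 → ℝ) × (Fin 2 → ℝ) | (p.1 0 - p.2 0) * (p.1 1 - p.2 1) < 0}
      ≤ (((ν₁.prod ν₁).map MeasurableEquiv.finTwoArrow.symm).prod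
        ((ν₂.prod ν₂).map MeasurableEquiv.finTwoArrow.symm))
        {p : (Fin 2 → ℝ) × (Fin 2 → ℝ) | 0 < (p.1 0 - p.2 0) * (p.1 1 - p.2 1)} := by
  have he := (MeasurableEquiv.finTwoArrow (α := ℝ)).symm.measurable
  rw [Measure.map_prod_map _ _ he he, Measure.map_apply (he.prodMap he)
    (measurableSet_lt (by fun_prop) measurable_const), Measure.map_apply (he.prodMap he)
    (measurableSet_lt measurable_const (by fun_prop))]
  exact measure_discordant_le_measure_concordant ν₁ ν₂

/-- If `(X_1, X_2)` is conditionally iid, then Kendall's tau is non-negative: for two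
independent copies of the pair, the probability of concordance minus the probability of
discordance is non-negative. -/
theorem condIID_kendall_tau_nonneg (μ : Measure (Fin 2 → ℝ)) [IsProbabilityMeasure μ]
    (hμ : IsCondIID μ) :
    0 ≤ ((μ.prod μ) {p : (Fin 2 → ℝ) × (Fin 2 → ℝ) |
            0 < (p.1 0 - p.2 0) * (p.1 1 - p.2 1)}).toReal -
         ((μ.prod μ) {p : (Fin 2 → ℝ) × (Fin 2 → ℝ) |
            (p.1 0 - p.2 0) * (p.1 1 - p.2 1) < 0}).toReal := by
  obtain ⟨γ, hγ, hcdf, hμ_cdf⟩ := hμ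
  have hμ_eq : μ = iidPairKernel ∘ₘ γ := eq_comp_iidPairKernel hcdf hμ_cdf
  rw [sub_nonneg]
  refine ENNReal.toReal_mono (measure_ne_top _ _) ?_
  rw [hμ_eq, Measure.comp_prod_comp, Measure.bind_apply (measurableSet_lt (by fun_prop)
    measurable_const) (Kernel.aemeasurable _), Measure.bind_apply (measurableSet_lt
    measurable_const (by fun_prop)) (Kernel.aemeasurable _)]
  refine lintegral_mono fun h ↦ ?_
  rw [Kernel.parallelComp_apply, iidPairKernel_apply, iidPairKernel_apply]
  exact map_finTwoArrow_symm_prod_discordant_le _ _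
end

section
/- (Maxwell's Theorem) If X_1, ..., X_d (d ≥ 2) are independent real random variables such that the vector (X_1, ..., X_d) is spherically symmetric (its law is invariant under every orthogonal transformation of ℝ^d) and not identically zero, then X_1, ..., X_d are iid centered normal random variables with a common variance. -/
open MeasureTheory ProbabilityTheory Matrix Real Filter

/-!
Independence turns the characteristic function `φ` of a coordinate into a product,
`φ a * φ b = φ (√(a² + b²))`, because a rotation in the plane of two coordinates carries
`a X₀ + b X₁` to `√(a² + b²) X₀`. Along `u = t²` this is the exponential equation: `φ` is
real and positive and `u ↦ log φ (√u)` is continuous and additive on `[0, ∞)`, hence linear,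
so `φ t = exp (-c t²)`, the characteristic function of `𝒩(0, 2c)`. A zero variance would
make every coordinate vanish almost surely.
-/

section Rotation

variable {R m n : Type*} [CommRing R] [Fintype n] [DecidableEq n]

theorem transpose_mul_self_one_add_mul_sub_one_mul [Fintype m] [DecidableEq m]
    {P : Matrix n m R} (hP : Pᵀ * P = 1) {Q : Matrix m m R} (hQ : Qᵀ * Q = 1) :
    (1 + P * (Q - 1) * Pᵀ)ᵀ * (1 + P * (Q - 1) * Pᵀ) = 1 := by
  have hA : (Q - 1)ᵀ + (Q - 1) + (Q - 1)ᵀ * (Q - 1) = 0 := by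
    rw [transpose_sub, transpose_one, ← sub_eq_zero_of_eq hQ]
    noncomm_ring
  generalize Q - 1 = A at hA ⊢
  calc (1 + P * A * Pᵀ)ᵀ * (1 + P * A * Pᵀ)
      = 1 + P * (Aᵀ + A + Aᵀ * (Pᵀ * P) * A) * Pᵀ := by
        simp only [transpose_add, transpose_one, transpose_mul, transpose_transpose,
          Matrix.add_mul, Matrix.mul_add, Matrix.one_mul, Matrix.mul_one, Matrix.mul_assoc]
        abel
    _ = 1 := by rw [hP, mul_one, hA, Matrix.mul_zero, Matrix.zero_mul, add_zero]

/-- The rotation `!![s, t; -t, s]` acting on the coordinates `a, b` and fixing the others. -/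
def planeRotation (a b : n) (s t : R) : Matrix n n R :=
  1 + (1 : Matrix n n R).submatrix id ![a, b] * (!![s, t; -t, s] - 1) *
    ((1 : Matrix n n R).submatrix id ![a, b])ᵀ

theorem planeRotation_mulVec_apply {a b : n} (hab : a ≠ b) (s t : R) (x : n → R) :
    (planeRotation a b s t *ᵥ x) a = s * x a + t * x b := by
  simp only [planeRotation, add_mulVec, one_mulVec, ← mulVec_mulVec, Pi.add_apply]
  simp [mulVec, dotProduct, Fin.sum_univ_two, one_apply, hab]
  ring

theorem transpose_planeRotation_mul_self {a b : n} (hab : a ≠ b) {s t : R}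
    (hst : s ^ 2 + t ^ 2 = 1) : (planeRotation a b s t)ᵀ * planeRotation a b s t = 1 := by
  refine transpose_mul_self_one_add_mul_sub_one_mul ?_ ?_
  · rw [transpose_submatrix, transpose_one,
      ← submatrix_mul _ _ _ _ _ Function.bijective_id, Matrix.one_mul]
    exact submatrix_one _ (injective_pair_iff_ne.mpr hab)
  · ext i j
    fin_cases i <;> fin_cases j <;> simp [Matrix.mul_apply, Fin.sum_univ_two] <;>
      first | linear_combination hst | ring

end Rotation

theorem map_mul_add_mul_eq_map_sqrt_mul {n : Type*} [Fintype n] [DecidableEq n]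
    {ν : Measure (n → ℝ)} (hν : ∀ O : Matrix n n ℝ, Oᵀ * O = 1 → ν.map (O *ᵥ ·) = ν)
    {i j : n} (hij : i ≠ j) (a b : ℝ) :
    ν.map (fun x => a * x i + b * x j) = ν.map (fun x => √(a ^ 2 + b ^ 2) * x i) := by
  set r := √(a ^ 2 + b ^ 2)
  rcases eq_or_ne r 0 with hr | hr
  · obtain ⟨rfl, rfl⟩ : a = 0 ∧ b = 0 := by
      rw [sqrt_eq_zero (by positivity)] at hr
      constructor <;> nlinarith [sq_nonneg a, sq_nonneg b]
    simp [hr]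
  have hst : (a / r) ^ 2 + (b / r) ^ 2 = 1 := by
    rw [div_pow, div_pow, ← add_div, div_eq_one_iff_eq (pow_ne_zero 2 hr),
      sq_sqrt (by positivity)]
  set O := planeRotation i j (a / r) (b / r)
  have hO : Measurable (O *ᵥ ·) := by fun_prop
  have hcomp : (fun x => a * x i + b * x j) = (fun y => r * y i) ∘ (O *ᵥ ·) := by
    ext x
    simp only [Function.comp, O, planeRotation_mulVec_apply hij]
    field_simp
  rw [hcomp, ← Measure.map_map (by fun_prop) hO, hν O (transpose_planeRotation_mul_self hij hst)]

theorem eq_mul_apply_one_of_map_add_of_nonneg {k : ℝ → ℝ} (hk : Continuous k)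
    (hadd : ∀ u v, 0 ≤ u → 0 ≤ v → k (u + v) = k u + k v) {u : ℝ} (hu : 0 ≤ u) :
    k u = u * k 1 := by
  -- the odd extension of `k` from `[0, ∞)`, additive on all of `ℝ`
  set F : ℝ → ℝ := fun x => k x⁺ - k x⁻
  have hF_sub : ∀ x y, 0 ≤ x → 0 ≤ y → F (x - y) = k x - k y := by
    intro x y hx hy
    have hxy : (x - y)⁺ + y = (x - y)⁻ + x := by linarith [posPart_sub_negPart (x - y)]
    have h := congrArg k hxy
    rw [hadd _ _ (posPart_nonneg _) hy, hadd _ _ (negPart_nonneg _) hx] at h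
    linarith
  have hF_add : ∀ x y, F (x + y) = F x + F y := by
    intro x y
    have hxy : x + y = (x⁺ + y⁺) - (x⁻ + y⁻) := by
      linarith [posPart_sub_negPart x, posPart_sub_negPart y]
    rw [hxy, hF_sub _ _ (by positivity) (by positivity), hadd _ _ (posPart_nonneg _)
      (posPart_nonneg _), hadd _ _ (negPart_nonneg _) (negPart_nonneg _)]
    ring
  have hF_eq : ∀ x, 0 ≤ x → F x = k x := by
    intro x hx
    have hk0 : k 0 = 0 := by simpa using hadd 0 0 le_rfl le_rfl
    simp [F, posPart_eq_self.mpr hx, negPart_eq_zero.mpr hx, hk0]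
  have hF_cont : Continuous F := (hk.comp continuous_posPart).sub (hk.comp continuous_negPart)
  have := map_real_smul (AddMonoidHom.mk' F hF_add) hF_cont u 1
  simp only [AddMonoidHom.mk'_apply, smul_eq_mul, mul_one] at this
  rw [← hF_eq u hu, this, hF_eq 1 zero_le_one]

theorem apply_abs_of_mul_eq_sqrt {M : Type*} [MulOneClass M] {f : ℝ → M} (h0 : f 0 = 1)
    (hmul : ∀ a b, f a * f b = f √(a ^ 2 + b ^ 2)) (t : ℝ) : f |t| = f t := by
  simpa [h0, sqrt_sq_eq_abs] using (hmul 0 t).symm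

section MulEqSqrt

variable {f : ℝ → ℝ} (h0 : f 0 = 1) (hmul : ∀ a b, f a * f b = f √(a ^ 2 + b ^ 2))
include h0 hmul

theorem eq_sq_of_mul_eq_sqrt (t : ℝ) : f t = f (t / √2) ^ 2 := by
  rw [sq, hmul, ← apply_abs_of_mul_eq_sqrt h0 hmul t, div_pow, sq_sqrt zero_le_two, ← add_div,
    add_self_div_two, sqrt_sq_eq_abs]

theorem pos_of_mul_eq_sqrt (hf : Continuous f) (t : ℝ) : 0 < f t := by
  have hnonneg : 0 ≤ f t := (eq_sq_of_mul_eq_sqrt h0 hmul t).symm ▸ sq_nonneg _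
  refine hnonneg.lt_of_ne' fun ht => ?_
  have hzero : ∀ n : ℕ, f (t / √2 ^ n) = 0 := by
    intro n
    induction n with
    | zero => simpa using ht
    | succ n ih =>
      rw [eq_sq_of_mul_eq_sqrt h0 hmul, div_div, ← pow_succ] at ih
      exact pow_eq_zero_iff two_ne_zero |>.mp ih
  have hlim : Tendsto (fun n : ℕ => t / √2 ^ n) atTop (nhds 0) := by
    simpa [div_eq_mul_inv] using (tendsto_pow_atTop_nhds_zero_of_lt_one (by positivity)
      (inv_lt_one_of_one_lt₀ (one_lt_sqrt_two))).const_mul t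
  have := (hf.tendsto 0).comp hlim
  simp [Function.comp_def, hzero, h0] at this

theorem exists_eq_exp_neg_mul_sq_of_mul_eq_sqrt (hf : Continuous f) :
    ∃ c, ∀ t, f t = exp (-c * t ^ 2) := by
  have hpos := pos_of_mul_eq_sqrt h0 hmul hf
  set k : ℝ → ℝ := fun u => log (f √u)
  have hk : Continuous k :=
    (hf.comp continuous_sqrt).log fun u => (hpos _).ne'
  have hadd : ∀ u v, 0 ≤ u → 0 ≤ v → k (u + v) = k u + k v := by
    intro u v hu hv
    simp only [k]
    rw [← log_mul (hpos _).ne' (hpos _).ne', hmul, sq_sqrt hu, sq_sqrt hv]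
  refine ⟨-k 1, fun t => ?_⟩
  rw [neg_neg, mul_comm, ← eq_mul_apply_one_of_map_add_of_nonneg hk hadd (sq_nonneg t)]
  simp only [k]
  rw [sqrt_sq_eq_abs, apply_abs_of_mul_eq_sqrt h0 hmul, exp_log (hpos t)]

end MulEqSqrt

theorem charFun_mul_charFun_eq_sqrt {Ω : Type*} [MeasurableSpace Ω] {P : Measure Ω}
    [IsProbabilityMeasure P] {Y Z : Ω → ℝ} (hY : Measurable Y) (hZ : Measurable Z)
    (hYZ : IndepFun Y Z P)
    (hlaw : ∀ a b : ℝ,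
      P.map (fun ω => a * Y ω + b * Z ω) = P.map (fun ω => √(a ^ 2 + b ^ 2) * Y ω))
    (a b : ℝ) :
    charFun (P.map Y) a * charFun (P.map Y) b = charFun (P.map Y) √(a ^ 2 + b ^ 2) := by
  have hZY : P.map Z = P.map Y := by simpa using hlaw 0 1
  calc charFun (P.map Y) a * charFun (P.map Y) b
      = charFun (P.map (fun ω => a * Y ω)) 1 * charFun (P.map (fun ω => b * Z ω)) 1 := by
        rw [charFun_map_mul_comp hY.aemeasurable, charFun_map_mul_comp hZ.aemeasurable, hZY,
          mul_one, mul_one]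
    _ = charFun (P.map (fun ω => a * Y ω + b * Z ω)) 1 := by
        have := (hYZ.comp (measurable_const_mul a) (measurable_const_mul b))
          |>.charFun_map_fun_add_eq_mul (by fun_prop) (by fun_prop)
        exact (congrFun this 1).symm
    _ = charFun (P.map Y) √(a ^ 2 + b ^ 2) := by
        rw [hlaw, charFun_map_mul_comp hY.aemeasurable, mul_one]

theorem exists_eq_gaussianReal_of_charFun_mul_eq_sqrt {μ : Measure ℝ} [IsProbabilityMeasure μ]
    (hμ : ∀ a b, charFun μ a * charFun μ b = charFun μ √(a ^ 2 + b ^ 2)) :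
    ∃ v, μ = gaussianReal 0 v := by
  have hμ0 : charFun μ 0 = 1 := by simp [charFun_zero]
  have hreal : ∀ t, ((charFun μ t).re : ℂ) = charFun μ t := by
    intro t
    rw [← Complex.conj_eq_iff_re, ← charFun_neg, ← apply_abs_of_mul_eq_sqrt hμ0 hμ,
      abs_neg, apply_abs_of_mul_eq_sqrt hμ0 hμ]
  set f : ℝ → ℝ := fun t => (charFun μ t).re
  have hf0 : f 0 = 1 := by simp [f, hμ0]
  have hfmul : ∀ a b, f a * f b = f √(a ^ 2 + b ^ 2) := by
    intro a b
    have h := hμ a b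
    rw [← hreal a, ← hreal b, ← hreal √(a ^ 2 + b ^ 2)] at h
    exact_mod_cast h
  obtain ⟨c, hc⟩ := exists_eq_exp_neg_mul_sq_of_mul_eq_sqrt hf0 hfmul
    (Complex.continuous_re.comp continuous_charFun)
  have hc0 : 0 ≤ c := by
    have h1 : f 1 ≤ 1 := (Complex.re_le_norm _).trans (norm_charFun_le_one 1)
    rw [hc, exp_le_one_iff] at h1
    linarith
  let v : NNReal := ⟨2 * c, by positivity⟩
  refine ⟨v, Measure.ext_of_charFun (funext fun t => ?_)⟩
  rw [charFun_gaussianReal, ← hreal, show (charFun μ t).re = f t from rfl, hc,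
    show (v : ℝ) = 2 * c from rfl]
  push_cast
  ring_nf

/-- Maxwell's Theorem: if `X_1, …, X_d` (`d ≥ 2`) are independent real random variables such
that the vector `(X_1, …, X_d)` is spherically symmetric (its law is invariant under every
orthogonal transformation of `ℝ^d`) and not identically zero, then the `X_i` are iid
centered normal with a common (positive) variance. -/
theorem maxwell_theorem {Ω : Type*} [MeasurableSpace Ω]
    (P : Measure Ω) [IsProbabilityMeasure P] {d : ℕ} (hd : 2 ≤ d)
    (X : Fin d → Ω → ℝ) (hX : ∀ i, Measurable (X i))
    (hindep : iIndepFun X P)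
    (hsph : ∀ O : Matrix (Fin d) (Fin d) ℝ, Oᵀ * O = 1 →
      P.map (fun ω => O.mulVec (fun i => X i ω)) = P.map (fun ω (i : Fin d) => X i ω))
    (hnz : ¬ (∀ᵐ ω ∂P, ∀ i, X i ω = 0)) :
    ∃ v : NNReal, 0 < v ∧ ∀ i, P.map (X i) = gaussianReal 0 v := by
  have hXvec : Measurable (fun ω (i : Fin d) => X i ω) := measurable_pi_lambda _ hX
  have hlaw : ∀ i j, i ≠ j → ∀ a b : ℝ, P.map (fun ω => a * X i ω + b * X j ω) =
      P.map (fun ω => √(a ^ 2 + b ^ 2) * X i ω) := by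
    intro i j hij a b
    have h := map_mul_add_mul_eq_map_sqrt_mul (fun O hO => by
      rw [Measure.map_map (by fun_prop) hXvec]; exact hsph O hO) hij a b
    rwa [Measure.map_map (by fun_prop) hXvec, Measure.map_map (by fun_prop) hXvec] at h
  let i₀ : Fin d := ⟨0, by omega⟩
  let i₁ : Fin d := ⟨1, by omega⟩
  have h01 : i₀ ≠ i₁ := by simp [i₀, i₁, Fin.ext_iff]
  have : IsProbabilityMeasure (P.map (X i₀)) :=
    Measure.isProbabilityMeasure_map (hX i₀).aemeasurable
  obtain ⟨v, hv⟩ := exists_eq_gaussianReal_of_charFun_mul_eq_sqrt <|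
    charFun_mul_charFun_eq_sqrt (hX i₀) (hX i₁) (hindep.indepFun h01) (hlaw i₀ i₁ h01)
  have hmarg : ∀ i, P.map (X i) = gaussianReal 0 v := by
    intro i
    rcases eq_or_ne i i₀ with rfl | hi
    · exact hv
    · simpa [hv] using hlaw i₀ i hi.symm 0 1
  refine ⟨v, pos_iff_ne_zero.mpr fun hv0 => hnz <| ae_all_iff.mpr fun i => ?_, hmarg⟩
  refine HasLaw.ae_eq_of_dirac (x := (0 : ℝ)) ⟨(hX i).aemeasurable, ?_⟩
  rw [hmarg, hv0, gaussianReal_zero_var]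
end

section
/- Let g_d : (0,∞) → [0,∞) be measurable with d ∫_0^∞ g_d(x) x^{d-1} dx = 1, and let X have density f(x) = g_d(max{x_1,...,x_d}) on (0,∞)^d. Then the (d-1)-dimensional marginal obtained by integrating out the last coordinate has density g_{d-1}(max{x_1,...,x_{d-1}}) where g_{d-1}(x) = ∫_x^∞ g_d(u) du + x g_d(x), and g_{d-1} satisfies (d-1) ∫_0^∞ g_{d-1}(x) x^{d-2} dx = 1. -/
/-!
On `(0, M]` the integrand `g (max M u)` is the constant `g M`, and on `(M, ∞)` it is `g` itself,
which gives the marginal density. For its normalisation, Tonelli on the triangle `0 < x < u` gives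
`∫₀^∞ (∫ₓ^∞ g) x^(d-2) dx = ∫₀^∞ g(u) u^(d-1) / (d-1) du = 1 / (d (d-1))`, while
`∫₀^∞ x g(x) x^(d-2) dx = 1 / d`; the two add up to `1 / (d-1)`.
-/

open MeasureTheory Set
open scoped ENNReal

theorem setIntegral_Ioi_max {E : Type*} [NormedAddCommGroup E] [NormedSpace ℝ E]
    [CompleteSpace E] {g : ℝ → E} {a M : ℝ} (haM : a ≤ M) (hg : IntegrableOn g (Ioi M)) :
    ∫ u in Ioi a, g (max M u) = (∫ u in Ioi M, g u) + (M - a) • g M := by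
  have h_Ioc : EqOn (fun u => g (max M u)) (fun _ => g M) (Ioc a M) :=
    fun u hu => by simp only [max_eq_left hu.2]
  have h_Ioi : EqOn (fun u => g (max M u)) g (Ioi M) :=
    fun u hu => by simp only [max_eq_right (mem_Ioi.1 hu).le]
  rw [← Ioc_union_Ioi_eq_Ioi haM, setIntegral_union Ioc_disjoint_Ioi_same measurableSet_Ioi
      ((integrableOn_const measure_Ioc_lt_top.ne).congr_fun h_Ioc.symm measurableSet_Ioc)
      (hg.congr_fun h_Ioi.symm measurableSet_Ioi),
    setIntegral_congr_fun measurableSet_Ioc h_Ioc, setIntegral_congr_fun measurableSet_Ioi h_Ioi,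
    setIntegral_const, measureReal_def, Real.volume_Ioc, ENNReal.toReal_ofReal (sub_nonneg.2 haM),
    add_comm]

theorem integrableOn_Ioi_of_integrableOn_mul_pow {g : ℝ → ℝ} {M : ℝ} (hM : 0 < M) (n : ℕ)
    (h : IntegrableOn (fun x => g x * x ^ n) (Ioi M)) : IntegrableOn g (Ioi M) := by
  have hbound : ∀ᵐ x ∂volume.restrict (Ioi M), ‖(x ^ n)⁻¹‖ ≤ (M ^ n)⁻¹ := by
    filter_upwards [ae_restrict_mem measurableSet_Ioi] with x hx
    rw [norm_inv, norm_pow, Real.norm_of_nonneg (hM.trans hx).le]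
    exact inv_anti₀ (pow_pos hM n) (pow_le_pow_left₀ hM.le hx.le n)
  refine IntegrableOn.congr_fun (h.mul_bdd (by fun_prop) hbound) (fun x hx => ?_) measurableSet_Ioi
  have : x ^ n ≠ 0 := pow_ne_zero n (hM.trans hx).ne'
  field_simp

theorem measurable_integral_Ioi {g : ℝ → ℝ} (hg : Measurable g) :
    Measurable fun x => ∫ u in Ioi x, g u := by
  have h_prod : StronglyMeasurable fun p : ℝ × ℝ => {q : ℝ × ℝ | q.1 < q.2}.indicator (g ·.2) p :=
    ((hg.comp measurable_snd).indicator
      (measurableSet_lt measurable_fst measurable_snd)).stronglyMeasurable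
  convert h_prod.integral_prod_right' (ν := volume) |>.measurable using 2 with x
  rw [← integral_indicator measurableSet_Ioi]
  rfl

theorem lintegral_Ioo_ofReal_pow {u : ℝ} (hu : 0 ≤ u) (k : ℕ) :
    ∫⁻ x in Ioo 0 u, ENNReal.ofReal (x ^ k) = ENNReal.ofReal (u ^ (k + 1) / (k + 1)) := by
  rw [Measure.restrict_congr_set Ioo_ae_eq_Ioc,
    ← ofReal_integral_eq_lintegral_ofReal (continuous_pow k).integrableOn_Ioc
      ((ae_restrict_mem measurableSet_Ioc).mono fun x hx => pow_nonneg hx.1.le k),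
    ← intervalIntegral.integral_of_le hu, integral_pow]
  simp

theorem lintegral_lintegral_Ioi_mul_pow {G : ℝ → ℝ≥0∞} (hG : Measurable G) (k : ℕ) :
    ∫⁻ x in Ioi 0, (∫⁻ u in Ioi x, G u) * ENNReal.ofReal (x ^ k)
      = ∫⁻ u in Ioi 0, G u * ENNReal.ofReal (u ^ (k + 1) / (k + 1)) := by
  set F : ℝ × ℝ → ℝ≥0∞ := fun p => G p.2 * ENNReal.ofReal (p.1 ^ k)
  have hF : Measurable ({p : ℝ × ℝ | p.1 < p.2}.indicator F) :=
    ((hG.comp measurable_snd).mul (measurable_fst.pow_const k).ennreal_ofReal).indicator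
      (measurableSet_lt measurable_fst measurable_snd)
  have h_Ioi (x u : ℝ) : {p : ℝ × ℝ | p.1 < p.2}.indicator F (x, u)
      = (Ioi x).indicator (fun u => F (x, u)) u := by simp [indicator_apply]
  have h_Iio (x u : ℝ) : {p : ℝ × ℝ | p.1 < p.2}.indicator F (x, u)
      = (Iio u).indicator (fun x => F (x, u)) x := by simp [indicator_apply]
  -- both sides are iterated integrals of `G u * x ^ k` over `{0 < x < u}`
  convert lintegral_lintegral_swap (μ := volume.restrict (Ioi 0))
    (ν := volume.restrict (Ioi 0)) (f := fun x u => {p : ℝ × ℝ | p.1 < p.2}.indicator F (x, u))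
    hF.aemeasurable using 1
  · refine setLIntegral_congr_fun measurableSet_Ioi fun x hx => ?_
    simp only [h_Ioi, F]
    rw [lintegral_indicator measurableSet_Ioi, Measure.restrict_restrict measurableSet_Ioi,
      inter_eq_left.2 (Ioi_subset_Ioi (le_of_lt hx)),
      lintegral_mul_const' _ _ ENNReal.ofReal_ne_top]
  · refine setLIntegral_congr_fun measurableSet_Ioi fun u hu => ?_
    simp only [h_Iio, F]
    rw [lintegral_indicator measurableSet_Iio, Measure.restrict_restrict measurableSet_Iio,
      Iio_inter_Ioi, lintegral_const_mul _ (by fun_prop), lintegral_Ioo_ofReal_pow (le_of_lt hu)]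

section TailMoment

variable {g : ℝ → ℝ} {k : ℕ}

theorem lintegral_ofReal_integral_Ioi_mul_pow (hg : Measurable g) (hg_nonneg : ∀ x, 0 ≤ g x)
    (hint : IntegrableOn (fun x => g x * x ^ (k + 1)) (Ioi 0)) :
    ∫⁻ x in Ioi 0, ENNReal.ofReal ((∫ u in Ioi x, g u) * x ^ k)
      = ENNReal.ofReal ((∫ x in Ioi 0, g x * x ^ (k + 1)) / (k + 1)) := by
  have h_nonneg : ∀ᵐ u ∂volume.restrict (Ioi (0 : ℝ)), 0 ≤ g u * u ^ (k + 1) / (k + 1) := by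
    filter_upwards [ae_restrict_mem measurableSet_Ioi] with u hu
    exact div_nonneg (mul_nonneg (hg_nonneg u) (pow_nonneg (le_of_lt hu) _)) (by positivity)
  calc ∫⁻ x in Ioi 0, ENNReal.ofReal ((∫ u in Ioi x, g u) * x ^ k)
      = ∫⁻ x in Ioi 0, (∫⁻ u in Ioi x, ENNReal.ofReal (g u)) * ENNReal.ofReal (x ^ k) := by
        refine setLIntegral_congr_fun measurableSet_Ioi fun x hx => ?_
        have htail : IntegrableOn g (Ioi x) := integrableOn_Ioi_of_integrableOn_mul_pow hx (k + 1)
          (hint.mono_set (Ioi_subset_Ioi (le_of_lt hx)))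
        rw [ENNReal.ofReal_mul (setIntegral_nonneg measurableSet_Ioi fun u _ => hg_nonneg u),
          ofReal_integral_eq_lintegral_ofReal htail (ae_of_all _ hg_nonneg)]
    _ = ∫⁻ u in Ioi 0, ENNReal.ofReal (g u) * ENNReal.ofReal (u ^ (k + 1) / (k + 1)) :=
        lintegral_lintegral_Ioi_mul_pow hg.ennreal_ofReal k
    _ = ∫⁻ u in Ioi 0, ENNReal.ofReal (g u * u ^ (k + 1) / (k + 1)) := by
        refine lintegral_congr fun u => ?_
        rw [← ENNReal.ofReal_mul (hg_nonneg u), mul_div_assoc]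
    _ = ENNReal.ofReal ((∫ x in Ioi 0, g x * x ^ (k + 1)) / (k + 1)) := by
        rw [← ofReal_integral_eq_lintegral_ofReal (hint.div_const _) h_nonneg, integral_div]

theorem ae_restrict_Ioi_integral_Ioi_mul_pow_nonneg (hg_nonneg : ∀ x, 0 ≤ g x) :
    ∀ᵐ x ∂volume.restrict (Ioi (0 : ℝ)), 0 ≤ (∫ u in Ioi x, g u) * x ^ k := by
  filter_upwards [ae_restrict_mem measurableSet_Ioi] with x hx
  exact mul_nonneg (setIntegral_nonneg measurableSet_Ioi fun u _ => hg_nonneg u)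
    (pow_nonneg (le_of_lt hx) k)

theorem integrableOn_integral_Ioi_mul_pow (hg : Measurable g) (hg_nonneg : ∀ x, 0 ≤ g x)
    (hint : IntegrableOn (fun x => g x * x ^ (k + 1)) (Ioi 0)) :
    IntegrableOn (fun x => (∫ u in Ioi x, g u) * x ^ k) (Ioi 0) := by
  refine ⟨((measurable_integral_Ioi hg).mul (measurable_id.pow_const k)).aestronglyMeasurable, ?_⟩
  rw [hasFiniteIntegral_iff_ofReal (ae_restrict_Ioi_integral_Ioi_mul_pow_nonneg hg_nonneg),
    lintegral_ofReal_integral_Ioi_mul_pow hg hg_nonneg hint]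
  exact ENNReal.ofReal_lt_top

theorem integral_integral_Ioi_mul_pow (hg : Measurable g) (hg_nonneg : ∀ x, 0 ≤ g x)
    (hint : IntegrableOn (fun x => g x * x ^ (k + 1)) (Ioi 0)) :
    ∫ x in Ioi 0, (∫ u in Ioi x, g u) * x ^ k = (∫ x in Ioi 0, g x * x ^ (k + 1)) / (k + 1) := by
  rw [integral_eq_lintegral_of_nonneg_ae (ae_restrict_Ioi_integral_Ioi_mul_pow_nonneg hg_nonneg)
      (integrableOn_integral_Ioi_mul_pow hg hg_nonneg hint).aestronglyMeasurable,
    lintegral_ofReal_integral_Ioi_mul_pow hg hg_nonneg hint, ENNReal.toReal_ofReal]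
  exact div_nonneg (setIntegral_nonneg measurableSet_Ioi fun x hx =>
    mul_nonneg (hg_nonneg x) (pow_nonneg (le_of_lt hx) _)) (by positivity)

end TailMoment

/-- Marginalization of ℓ∞-norm symmetric densities: if `X` has density
`f(x) = g_d(max{x_1, …, x_d})` on `(0,∞)^d` with `d ∫_0^∞ g_d(x) x^{d-1} dx = 1`, then
integrating out the last coordinate yields the density `g_{d-1}(max{x_1, …, x_{d-1}})`
where `g_{d-1}(x) = ∫_x^∞ g_d(u) du + x g_d(x)`, and `g_{d-1}` satisfies the corresponding
normalization `(d-1) ∫_0^∞ g_{d-1}(x) x^{d-2} dx = 1`. -/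
theorem linf_symmetric_marginal {d : ℕ} (hd : 2 ≤ d) (g : ℝ → ℝ)
    (hg : Measurable g) (hgpos : ∀ x, 0 ≤ g x)
    (hnorm : (d : ℝ) * ∫ x in Set.Ioi (0 : ℝ), g x * x ^ (d - 1) = 1) :
    (∀ x : Fin (d - 1) → ℝ, (∀ i, 0 < x i) →
      (∫ u in Set.Ioi (0 : ℝ), g (max (⨆ i, x i) u))
        = (∫ u in Set.Ioi (⨆ i, x i), g u) + (⨆ i, x i) * g (⨆ i, x i)) ∧
    ((d : ℝ) - 1) *
      (∫ x in Set.Ioi (0 : ℝ), ((∫ u in Set.Ioi x, g u) + x * g x) * x ^ (d - 2)) = 1 := by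
  obtain ⟨k, rfl⟩ : ∃ k, d = k + 2 := ⟨d - 2, by omega⟩
  rw [show k + 2 - 1 = k + 1 from rfl] at hnorm
  have hint : IntegrableOn (fun x => g x * x ^ (k + 1)) (Ioi 0) := by
    by_contra h
    simp [integral_undef h] at hnorm
  refine ⟨fun x hx => ?_, ?_⟩
  · have hM : 0 < ⨆ i, x i := (hx ⟨0, by omega⟩).trans_le (le_ciSup (finite_range x).bddAbove _)
    simpa using setIntegral_Ioi_max hM.le <| integrableOn_Ioi_of_integrableOn_mul_pow hM (k + 1)
      (hint.mono_set (Ioi_subset_Ioi hM.le))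
  · have hsplit : (fun x => ((∫ u in Ioi x, g u) + x * g x) * x ^ (k + 2 - 2))
        = fun x => (∫ u in Ioi x, g u) * x ^ k + g x * x ^ (k + 1) := by
      funext x
      rw [show k + 2 - 2 = k from rfl]
      ring
    rw [hsplit, integral_add (integrableOn_integral_Ioi_mul_pow hg hgpos hint) hint,
      integral_integral_Ioi_mul_pow hg hgpos hint]
    set I := ∫ x in Ioi (0 : ℝ), g x * x ^ (k + 1)
    push_cast at hnorm ⊢
    calc ((k : ℝ) + 2 - 1) * (I / (k + 1) + I) = (k + 2) * I := by field_simp; ring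
      _ = 1 := hnorm
end

section
/- Let Z be a non-decreasing stochastic process with Z_0 = 0 that is strongly infinitely divisible with respect to time, meaning that for every n ∈ ℕ, Z has the same law (as a process) as the sum of n independent copies of Z time-scaled by 1/n: {Z_t}_{t≥0} =_d {Σ_{i=1}^n Z^{(i)}_{t/n}}_{t≥0}. Let ε_1,...,ε_d be iid unit exponentials independent of Z and X_k = inf{t ≥ 0 : Z_t > ε_k}. Then the survival function F̄(x) = P(X_1 > x_1, ..., X_d > x_d) = E[exp(-Σ_k Z_{x_k})] satisfies the min-stability relation F̄(x)^t = F̄(tx) for all t > 0 of the form t = 1/n and t = n, n ∈ ℕ; in particular each X_k is exponentially distributed. -/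
open MeasureTheory ProbabilityTheory Filter Topology

/-! Conditioning on `Z`, independence of the `ε_k` turns the survival probability into
`E[exp(-∑_k Z_{x_k})]`. Strong IDT makes this Laplace functional at `n x` the `n`-th power of
the one at `x`, which gives min-stability. In one dimension, `s ↦ -log E[exp(-Z_s)]` is then
nondecreasing and `ℕ`-homogeneous, hence linear. -/

/-- `Z` is strongly infinitely divisible with respect to time (in finite-dimensional laws). -/
def IsStrongIDT {Ω : Type*} [MeasurableSpace Ω] (P : Measure Ω) (Z : ℝ → Ω → ℝ) : Prop :=
  ∀ n : ℕ, 0 < n → ∀ (m : ℕ) (t : Fin m → ℝ),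
    P.map (fun ω (j : Fin m) => Z (t j) ω)
      = (Measure.pi fun _ : Fin n => P).map
          (fun ωs (j : Fin m) => ∑ i : Fin n, Z (t j / n) (ωs i))

lemma eq_mul_of_monotoneOn_of_map_nat_mul {φ : ℝ → ℝ} (hmono : MonotoneOn φ (Set.Ici 0))
    (hhom : ∀ n : ℕ, 0 < n → ∀ s, 0 ≤ s → φ (n * s) = n * φ s) {s : ℝ} (hs : 0 ≤ s) :
    φ s = s * φ 1 := by
  have h0 : φ 0 = 0 := by
    have h := hhom 2 two_pos 0 le_rfl
    norm_num at h
    linarith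
  have hnat : ∀ m : ℕ, φ m = m * φ 1 := by
    intro m
    rcases m.eq_zero_or_pos with rfl | hm
    · simp [h0]
    · simpa using hhom m hm 1 zero_le_one
  have h1 : 0 ≤ φ 1 := h0 ▸ hmono (Set.mem_Ici.mpr le_rfl) (Set.mem_Ici.mpr zero_le_one) zero_le_one
  -- With `m = ⌊n s⌋`, both `n φ(s)` and `n s φ(1)` lie between `m φ(1)` and `(m + 1) φ(1)`.
  have hbound : ∀ n : ℕ, 0 < n → |φ s - s * φ 1| * n ≤ φ 1 := by
    intro n hn
    have hns : 0 ≤ (n : ℝ) * s := by positivity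
    set m := ⌊(n : ℝ) * s⌋₊
    have hm : (m : ℝ) ≤ n * s := Nat.floor_le hns
    have hm' : (n : ℝ) * s < m + 1 := Nat.lt_floor_add_one _
    have hlo : m * φ 1 ≤ n * φ s := by
      rw [← hnat, ← hhom n hn s hs]
      exact hmono (Set.mem_Ici.mpr (Nat.cast_nonneg m)) (Set.mem_Ici.mpr hns) hm
    have hhi : n * φ s ≤ (m + 1) * φ 1 := by
      rw [← hhom n hn s hs, ← Nat.cast_add_one, ← hnat]
      exact hmono (Set.mem_Ici.mpr hns) (Set.mem_Ici.mpr (by positivity))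
        (by push_cast; exact hm'.le)
    rw [← abs_of_pos (Nat.cast_pos.mpr hn : (0 : ℝ) < n), ← abs_mul, sub_mul, abs_sub_le_iff]
    constructor <;> nlinarith
  by_contra hne
  have hpos : 0 < |φ s - s * φ 1| := abs_pos.mpr (sub_ne_zero.mpr hne)
  obtain ⟨n, hn⟩ := exists_nat_gt (φ 1 / |φ s - s * φ 1|)
  have hn0 : 0 < n := by exact_mod_cast (div_nonneg h1 hpos.le).trans_lt hn
  have := hbound n hn0
  rw [div_lt_iff₀ hpos] at hn
  linarith

lemma exists_eq_exp_of_antitoneOn_of_map_nat_mul_eq_pow {g : ℝ → ℝ}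
    (hpos : ∀ s, 0 ≤ s → 0 < g s) (hanti : AntitoneOn g (Set.Ici 0))
    (hpow : ∀ n : ℕ, 0 < n → ∀ s, 0 ≤ s → g (n * s) = g s ^ n) :
    ∃ lam : ℝ, 0 ≤ lam ∧ ∀ s, 0 ≤ s → g s = Real.exp (-(lam * s)) := by
  set φ : ℝ → ℝ := fun s => -Real.log (g s)
  have hmono : MonotoneOn φ (Set.Ici 0) := fun s hs u hu hsu =>
    neg_le_neg (Real.log_le_log (hpos u hu) (hanti hs hu hsu))
  have hhom : ∀ n : ℕ, 0 < n → ∀ s, 0 ≤ s → φ (n * s) = n * φ s := fun n hn s hs => by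
    simp only [φ, hpow n hn s hs, Real.log_pow]
    ring
  have hlin := fun s (hs : 0 ≤ s) => eq_mul_of_monotoneOn_of_map_nat_mul hmono hhom hs
  have hφ0 : φ 0 = 0 := by simpa using hlin 0 le_rfl
  refine ⟨φ 1, hφ0 ▸ hmono (Set.mem_Ici.mpr le_rfl) (Set.mem_Ici.mpr zero_le_one) zero_le_one,
    fun s hs => ?_⟩
  rw [mul_comm, ← hlin s hs, neg_neg, Real.exp_log (hpos s hs)]

lemma setOf_forall_le_eq_of_monotone {Ω ι : Type*} {Z : ℝ → Ω → ℝ}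
    (hZmono : ∀ ω, Monotone (fun t => Z t ω)) {ε : ι → Ω → ℝ} {x : ι → ℝ} (hx : ∀ k, 0 ≤ x k) :
    {ω | ∀ k, ∀ t : ℝ, 0 ≤ t → t ≤ x k → Z t ω ≤ ε k ω} = {ω | ∀ k, Z (x k) ω ≤ ε k ω} := by
  ext ω
  exact ⟨fun h k => h k (x k) (hx k) le_rfl,
    fun h k _ _ htx => (hZmono ω htx).trans (h k)⟩

section Probability

variable {Ω : Type*} [MeasurableSpace Ω] {P : Measure Ω}

lemma measure_le_eq_exp_neg [IsProbabilityMeasure P] {e : Ω → ℝ}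
    (he : ∀ s : ℝ, 0 ≤ s → (P {ω | s < e ω}).toReal = Real.exp (-s)) {s : ℝ} (hs : 0 ≤ s) :
    (P {ω | s ≤ e ω}).toReal = Real.exp (-s) := by
  have hlower : Real.exp (-s) ≤ (P {ω | s ≤ e ω}).toReal := by
    rw [← he s hs]
    exact ENNReal.toReal_mono (measure_ne_top _ _) (measure_mono fun ω (h : s < e ω) => h.le)
  refine le_antisymm ?_ hlower
  rcases hs.eq_or_lt with rfl | hs
  · simpa using ENNReal.toReal_mono (measure_ne_top P _) (measure_mono (Set.subset_univ _))
  · have hlim : Tendsto (fun u => Real.exp (-u)) (𝓝[<] s) (𝓝 (Real.exp (-s))) :=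
      ((Real.continuous_exp.comp continuous_neg).tendsto s).mono_left nhdsWithin_le_nhds
    refine ge_of_tendsto hlim ?_
    filter_upwards [Ioo_mem_nhdsLT hs] with u hu
    rw [← he u hu.1.le]
    exact ENNReal.toReal_mono (measure_ne_top _ _)
      (measure_mono fun ω (h : s ≤ e ω) => hu.2.trans_le h)

lemma measure_forall_le_eq_exp_neg_sum [IsProbabilityMeasure P] {ι : Type*} [Fintype ι]
    {ε : ι → Ω → ℝ} (hindep : iIndepFun ε P)
    (hexp : ∀ k, ∀ s : ℝ, 0 ≤ s → (P {ω | s < ε k ω}).toReal = Real.exp (-s))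
    {s : ι → ℝ} (hs : ∀ k, 0 ≤ s k) :
    P {ω | ∀ k, s k ≤ ε k ω} = ENNReal.ofReal (Real.exp (-∑ k, s k)) := by
  have hset : {ω | ∀ k, s k ≤ ε k ω} = ⋂ k, ε k ⁻¹' Set.Ici (s k) := by
    ext; simp
  rw [hset, hindep.meas_iInter fun k => ⟨Set.Ici (s k), measurableSet_Ici, rfl⟩,
    ← Finset.sum_neg_distrib, Real.exp_sum,
    ENNReal.ofReal_prod_of_nonneg fun k _ => (Real.exp_pos _).le]
  refine Finset.prod_congr rfl fun k _ => ?_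
  rw [← measure_le_eq_exp_neg (hexp k) (hs k), ENNReal.ofReal_toReal (measure_ne_top _ _)]
  rfl

lemma ProbabilityTheory.IndepFun.measure_preimage_eq_lintegral [IsFiniteMeasure P] {α β : Type*}
    [MeasurableSpace α] [MeasurableSpace β] {X : Ω → α} {Y : Ω → β} (hXY : IndepFun X Y P)
    (hX : Measurable X) (hY : Measurable Y) {S : Set (α × β)} (hS : MeasurableSet S) :
    P ((fun ω => (X ω, Y ω)) ⁻¹' S) = ∫⁻ ω, P (Y ⁻¹' {b | (X ω, b) ∈ S}) ∂P := by
  rw [← Measure.map_apply (hX.prodMk hY) hS,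
    (indepFun_iff_map_prod_eq_prod_map_map hX.aemeasurable hY.aemeasurable).mp hXY,
    Measure.prod_apply hS, lintegral_map (measurable_measure_prodMk_left hS) hX]
  exact lintegral_congr fun ω => Measure.map_apply hY (measurable_prodMk_left hS)

lemma measure_forall_le_eq_integral_exp_neg_sum [IsFiniteMeasure P] {ι : Type*} [Fintype ι]
    {V E : Ω → ι → ℝ} (hV : Measurable V) (hE : Measurable E) (hVE : IndepFun V E P)
    (hV0 : ∀ ω k, 0 ≤ V ω k)
    (hEexp : ∀ s : ι → ℝ, (∀ k, 0 ≤ s k) →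
      P {ω | ∀ k, s k ≤ E ω k} = ENNReal.ofReal (Real.exp (-∑ k, s k))) :
    (P {ω | ∀ k, V ω k ≤ E ω k}).toReal = ∫ ω, Real.exp (-∑ k, V ω k) ∂P := by
  have hS : MeasurableSet {p : (ι → ℝ) × (ι → ℝ) | ∀ k, p.1 k ≤ p.2 k} := by
    simp only [Set.ofPred_forall]
    exact MeasurableSet.iInter fun k => measurableSet_le (by fun_prop) (by fun_prop)
  rw [integral_eq_lintegral_of_nonneg_ae (ae_of_all _ fun ω => (Real.exp_pos _).le)
    (by fun_prop), ← lintegral_congr fun ω => hEexp (V ω) (hV0 ω)]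
  exact congrArg ENNReal.toReal (hVE.measure_preimage_eq_lintegral hV hE hS)

lemma integral_exp_neg_sum_eq_pow_of_map_eq [IsFiniteMeasure P] {ι : Type*} [Fintype ι]
    {n : ℕ} {W V : Ω → ι → ℝ} (hW : Measurable W) (hV : Measurable V)
    (hlaw : P.map W = (Measure.pi fun _ : Fin n => P).map (fun ωs k => ∑ i, V (ωs i) k)) :
    ∫ ω, Real.exp (-∑ k, W ω k) ∂P = (∫ ω, Real.exp (-∑ k, V ω k) ∂P) ^ n := by
  have hf : Measurable fun v : ι → ℝ => Real.exp (-∑ k, v k) := by fun_prop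
  have hsum : Measurable fun (ωs : Fin n → Ω) k => ∑ i, V (ωs i) k :=
    measurable_pi_lambda _ fun k => Finset.measurable_sum _ fun i _ =>
      (measurable_pi_apply k).comp (hV.comp (measurable_pi_apply i))
  have hpow := integral_fintype_prod_eq_pow (ι := Fin n) (μ := P)
    fun ω => Real.exp (-∑ k, V ω k)
  rw [Fintype.card_fin] at hpow
  rw [← hpow, ← integral_map hW.aemeasurable hf.aestronglyMeasurable, hlaw,
    integral_map hsum.aemeasurable hf.aestronglyMeasurable]
  refine integral_congr_ae (ae_of_all _ fun ωs => ?_)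
  dsimp only
  rw [Finset.sum_comm, ← Real.exp_sum, ← Finset.sum_neg_distrib]

variable [IsProbabilityMeasure P] {Z : ℝ → Ω → ℝ}

lemma survival_eq_integral_exp_neg_sum {ι : Type*} [Fintype ι] (hZmeas : ∀ t, Measurable (Z t))
    (hZ0 : ∀ ω, Z 0 ω = 0) (hZmono : ∀ ω, Monotone (fun t => Z t ω))
    {ε : ι → Ω → ℝ} (hε : ∀ k, Measurable (ε k))
    (hεexp : ∀ k, ∀ s : ℝ, 0 ≤ s → (P {ω | s < ε k ω}).toReal = Real.exp (-s))
    (hεindep : iIndepFun ε P)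
    (hεZ : IndepFun (fun ω k => ε k ω) (fun ω t => Z t ω) P) {x : ι → ℝ} (hx : ∀ k, 0 ≤ x k) :
    (P {ω | ∀ k, ∀ t : ℝ, 0 ≤ t → t ≤ x k → Z t ω ≤ ε k ω}).toReal
      = ∫ ω, Real.exp (-∑ k, Z (x k) ω) ∂P := by
  rw [setOf_forall_le_eq_of_monotone hZmono hx]
  refine measure_forall_le_eq_integral_exp_neg_sum (V := fun ω k => Z (x k) ω)
    (E := fun ω k => ε k ω) (measurable_pi_lambda _ fun k => hZmeas _)
    (measurable_pi_lambda _ fun k => hε k) ?_ (fun ω k => hZ0 ω ▸ hZmono ω (hx k))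
    fun s hs => measure_forall_le_eq_exp_neg_sum hεindep hεexp hs
  exact hεZ.symm.comp (measurable_pi_lambda _ fun k => measurable_pi_apply (x k)) measurable_id

lemma IsStrongIDT.integral_exp_neg_sum_nat_mul (hZ : IsStrongIDT P Z)
    (hZmeas : ∀ t, Measurable (Z t)) {n : ℕ} (hn : 0 < n) {m : ℕ} (x : Fin m → ℝ) :
    ∫ ω, Real.exp (-∑ j, Z (n * x j) ω) ∂P = (∫ ω, Real.exp (-∑ j, Z (x j) ω) ∂P) ^ n := by
  have hlaw := hZ n hn m fun j => n * x j
  simp only [mul_div_cancel_left₀ _ (Nat.cast_ne_zero.mpr hn.ne' : (n : ℝ) ≠ 0)] at hlaw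
  exact integral_exp_neg_sum_eq_pow_of_map_eq (measurable_pi_lambda _ fun j => hZmeas _)
    (measurable_pi_lambda _ fun j => hZmeas _) hlaw

lemma IsStrongIDT.exists_integral_exp_neg_eq (hZ : IsStrongIDT P Z)
    (hZmeas : ∀ t, Measurable (Z t)) (hZ0 : ∀ ω, Z 0 ω = 0)
    (hZmono : ∀ ω, Monotone (fun t => Z t ω)) :
    ∃ lam : ℝ, 0 ≤ lam ∧ ∀ s, 0 ≤ s → ∫ ω, Real.exp (-Z s ω) ∂P = Real.exp (-(lam * s)) := by
  have hint : ∀ s, 0 ≤ s → Integrable (fun ω => Real.exp (-Z s ω)) P := fun s hs =>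
    Integrable.mono' (integrable_const 1) (by fun_prop) (ae_of_all _ fun ω => by
      rw [Real.norm_eq_abs, abs_of_pos (Real.exp_pos _), Real.exp_le_one_iff, neg_nonpos]
      exact hZ0 ω ▸ hZmono ω hs)
  refine exists_eq_exp_of_antitoneOn_of_map_nat_mul_eq_pow
    (fun s hs => integral_exp_pos (hint s hs)) (fun s hs u hu hsu => integral_mono (hint u hu) (hint s hs) fun ω =>
      Real.exp_le_exp.mpr (neg_le_neg (hZmono ω hsu))) fun n hn s _ => ?_
  simpa using hZ.integral_exp_neg_sum_nat_mul hZmeas hn fun _ : Fin 1 => s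

end Probability

theorem strongIDT_min_stable_general {Ω : Type*} [MeasurableSpace Ω]
    (P : Measure Ω) [IsProbabilityMeasure P] {d : ℕ}
    (Z : ℝ → Ω → ℝ) (hZmeas : ∀ t, Measurable (Z t))
    (hZ0 : ∀ ω, Z 0 ω = 0) (hZmono : ∀ ω, Monotone (fun t => Z t ω))
    (hIDT : ∀ n : ℕ, 0 < n → ∀ (m : ℕ) (t : Fin m → ℝ),
      P.map (fun ω (j : Fin m) => Z (t j) ω)
        = (Measure.pi fun _ : Fin n => P).map
            (fun ωs (j : Fin m) => ∑ i : Fin n, Z (t j / n) (ωs i)))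
    (ε : Fin d → Ω → ℝ) (hε : ∀ k, Measurable (ε k))
    (hεexp : ∀ k, ∀ s : ℝ, 0 ≤ s → (P {ω | s < ε k ω}).toReal = Real.exp (-s))
    (hεindep : iIndepFun ε P)
    (hεZ : IndepFun (fun ω (k : Fin d) => ε k ω) (fun ω (t : ℝ) => Z t ω) P) :
    (∀ x : Fin d → ℝ, (∀ k, 0 ≤ x k) →
      (P {ω | ∀ k, ∀ t : ℝ, 0 ≤ t → t ≤ x k → Z t ω ≤ ε k ω}).toReal
        = ∫ ω, Real.exp (-(∑ k, Z (x k) ω)) ∂P) ∧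
    (∀ n : ℕ, 0 < n → ∀ x : Fin d → ℝ, (∀ k, 0 ≤ x k) →
      ((P {ω | ∀ k, ∀ t : ℝ, 0 ≤ t → t ≤ x k → Z t ω ≤ ε k ω}).toReal) ^ n
          = (P {ω | ∀ k, ∀ t : ℝ, 0 ≤ t → t ≤ (n : ℝ) * x k → Z t ω ≤ ε k ω}).toReal ∧
      ((P {ω | ∀ k, ∀ t : ℝ, 0 ≤ t → t ≤ x k → Z t ω ≤ ε k ω}).toReal) ^ ((n : ℝ)⁻¹)
          = (P {ω | ∀ k, ∀ t : ℝ, 0 ≤ t → t ≤ x k / (n : ℝ) → Z t ω ≤ ε k ω}).toReal) ∧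
    (∃ lam : ℝ, 0 ≤ lam ∧ ∀ k : Fin d, ∀ s : ℝ, 0 ≤ s →
      (P {ω | ∀ t : ℝ, 0 ≤ t → t ≤ s → Z t ω ≤ ε k ω}).toReal
        = Real.exp (-(lam * s))) := by
  have hF := fun (x : Fin d → ℝ) (hx : ∀ k, 0 ≤ x k) =>
    survival_eq_integral_exp_neg_sum hZmeas hZ0 hZmono hε hεexp hεindep hεZ hx
  have hpow : ∀ n : ℕ, 0 < n → ∀ x : Fin d → ℝ, (∀ k, 0 ≤ x k) →
      ((P {ω | ∀ k, ∀ t : ℝ, 0 ≤ t → t ≤ x k → Z t ω ≤ ε k ω}).toReal) ^ n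
        = (P {ω | ∀ k, ∀ t : ℝ, 0 ≤ t → t ≤ (n : ℝ) * x k → Z t ω ≤ ε k ω}).toReal :=
    fun n hn x hx => by
      rw [hF x hx, hF _ fun k => mul_nonneg n.cast_nonneg (hx k),
        IsStrongIDT.integral_exp_neg_sum_nat_mul hIDT hZmeas hn]
  refine ⟨hF, fun n hn x hx => ⟨hpow n hn x hx, ?_⟩, ?_⟩
  · have hroot := hpow n hn (fun k => x k / n) fun k => div_nonneg (hx k) n.cast_nonneg
    simp only [mul_div_cancel₀ _ (Nat.cast_ne_zero.mpr hn.ne' : (n : ℝ) ≠ 0)] at hroot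
    rw [← hroot, Real.pow_rpow_inv_natCast ENNReal.toReal_nonneg hn.ne']
  · obtain ⟨lam, hlam, hexp⟩ := IsStrongIDT.exists_integral_exp_neg_eq hIDT hZmeas hZ0 hZmono
    refine ⟨lam, hlam, fun k s hs => ?_⟩
    have hsingle := survival_eq_integral_exp_neg_sum (ι := Unit) (ε := fun _ => ε k) hZmeas hZ0
      hZmono (fun _ => hε k) (fun _ => hεexp k) iIndepFun.of_subsingleton
      (hεZ.comp (measurable_pi_lambda _ fun _ => measurable_pi_apply k) measurable_id)
      (x := fun _ => s) fun _ => hs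
    simpa [hexp s hs] using hsingle

/-- Let `Z` be a non-decreasing right-continuous process with `Z_0 = 0` that is strongly
infinitely divisible with respect to time: for every `n`, `Z` has the same finite-dimensional
distributions as the sum of `n` independent copies of `Z` time-scaled by `1/n`.  With
`ε_1, …, ε_d` iid unit exponentials independent of `Z` and first-passage times
`X_k = inf {t ≥ 0 | Z_t > ε_k}` (the event `{X_k > s}` is encoded as
`{∀ t ∈ [0,s], Z_t ≤ ε_k}`), the survival function
`F̄(x) = P(X_1 > x_1, …, X_d > x_d) = E[exp(-∑_k Z_{x_k})]` satisfies the min-stability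
relation `F̄(x)^t = F̄(t x)` for all `t = n` and `t = 1/n`, `n ∈ ℕ`; in particular each `X_k`
is exponentially distributed. -/
theorem strongIDT_min_stable {Ω : Type*} [MeasurableSpace Ω]
    (P : Measure Ω) [IsProbabilityMeasure P] {d : ℕ}
    (Z : ℝ → Ω → ℝ) (hZmeas : ∀ t, Measurable (Z t))
    (hZ0 : ∀ ω, Z 0 ω = 0) (hZmono : ∀ ω, Monotone (fun t => Z t ω))
    (hZrc : ∀ ω t, ContinuousWithinAt (fun s => Z s ω) (Set.Ici t) t)
    (hIDT : ∀ n : ℕ, 0 < n → ∀ (m : ℕ) (t : Fin m → ℝ),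
      P.map (fun ω (j : Fin m) => Z (t j) ω)
        = (Measure.pi fun _ : Fin n => P).map
            (fun ωs (j : Fin m) => ∑ i : Fin n, Z (t j / n) (ωs i)))
    (ε : Fin d → Ω → ℝ) (hε : ∀ k, Measurable (ε k))
    (hεexp : ∀ k, ∀ s : ℝ, 0 ≤ s → (P {ω | s < ε k ω}).toReal = Real.exp (-s))
    (hεindep : iIndepFun ε P)
    (hεZ : IndepFun (fun ω (k : Fin d) => ε k ω) (fun ω (t : ℝ) => Z t ω) P) :
    (∀ x : Fin d → ℝ, (∀ k, 0 ≤ x k) →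
      (P {ω | ∀ k, ∀ t : ℝ, 0 ≤ t → t ≤ x k → Z t ω ≤ ε k ω}).toReal
        = ∫ ω, Real.exp (-(∑ k, Z (x k) ω)) ∂P) ∧
    (∀ n : ℕ, 0 < n → ∀ x : Fin d → ℝ, (∀ k, 0 ≤ x k) →
      ((P {ω | ∀ k, ∀ t : ℝ, 0 ≤ t → t ≤ x k → Z t ω ≤ ε k ω}).toReal) ^ n
          = (P {ω | ∀ k, ∀ t : ℝ, 0 ≤ t → t ≤ (n : ℝ) * x k → Z t ω ≤ ε k ω}).toReal ∧
      ((P {ω | ∀ k, ∀ t : ℝ, 0 ≤ t → t ≤ x k → Z t ω ≤ ε k ω}).toReal) ^ ((n : ℝ)⁻¹)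
          = (P {ω | ∀ k, ∀ t : ℝ, 0 ≤ t → t ≤ x k / (n : ℝ) → Z t ω ≤ ε k ω}).toReal) ∧
    (∃ lam : ℝ, 0 ≤ lam ∧ ∀ k : Fin d, ∀ s : ℝ, 0 ≤ s →
      (P {ω | ∀ t : ℝ, 0 ≤ t → t ≤ s → Z t ω ≤ ε k ω}).toReal
        = Real.exp (-(lam * s))) :=
  strongIDT_min_stable_general P Z hZmeas hZ0 hZmono hIDT ε hε hεexp hεindep hεZ
end
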